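/- Let X be a compact metric space, d ≥ 1, and let f : ℝᵈ → [0, +∞] be convex and lower semicontinuous. Let (Vₕ) and V be finite Borel measures on X, let Aₕ : X → ℝᵈ be Vₕ-integrable and A : X → ℝᵈ be V-integrable. Assume that Vₕ converges to V weakly, i.e. ∫_X φ dVₕ → ∫_X φ dV for every continuous φ : X → ℝ, and that the vector measures Aₕ·Vₕ converge weakly to A·V, i.e. ∫_X φ · Aₕ dVₕ → ∫_X φ · A dV (in ℝᵈ) for every continuous φ : X → ℝ. Then ∫_X f(A(x)) dV(x) ≤ liminf_{h→∞} ∫_X f(Aₕ(x)) dVₕ(x). -/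

import Mathlib

/-!
A convex lower semicontinuous `f ≥ 0` is the supremum of countably many continuous affine
minorants `ℓₙ` (Hahn–Banach on its epigraph, then a dense sequence of minorants), so by monotone
convergence it suffices to bound `∫ maxₙ∈ₛ ℓₙ(A)⁺ dV` for finite `s`. Up to `ε`,
`maxₙ∈ₛ ℓₙ(a)⁺ ≤ ∑ₙ θₙ(a) ℓₙ(a)` for continuous weights `θₙ ≥ 0` with `∑ₙ θₙ ≤ 1`. Evaluating
the weights along continuous maps `Bₖ → A` (a.e.) gives integrands `∑ₙ wₙ(x) ℓₙ(A x)` with `wₙ`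
continuous on `X`: their integrals against `Vₕ` converge by the two weak convergences, and are
bounded by `∫ f(Aₕ) dVₕ`.
-/

open MeasureTheory Filter Topology ENNReal NNReal Set

section ConvexAnalysis

variable {E : Type*}

/-- `0 ≤ t` is needed because `ENNReal.ofReal` sends every negative `t` to `0`. -/
def realEpigraph (f : E → ℝ≥0∞) : Set (E × ℝ) := {q | 0 ≤ q.2 ∧ f q.1 ≤ ENNReal.ofReal q.2}

lemma isClosed_realEpigraph [TopologicalSpace E] {f : E → ℝ≥0∞} (hlsc : LowerSemicontinuous f) :
    IsClosed (realEpigraph f) :=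
  (isClosed_le continuous_const continuous_snd).inter <| hlsc.isClosed_epigraph.preimage <|
    continuous_fst.prodMk (ENNReal.continuous_ofReal.comp continuous_snd)

lemma convex_realEpigraph [AddCommGroup E] [Module ℝ E] {f : E → ℝ≥0∞}
    (hconv : ∀ (x y : E) (t : ℝ), 0 ≤ t → t ≤ 1 →
      f (t • x + (1 - t) • y) ≤ ENNReal.ofReal t * f x + ENNReal.ofReal (1 - t) * f y) :
    Convex ℝ (realEpigraph f) := by
  rintro ⟨x, r⟩ ⟨hr, hx⟩ ⟨y, r'⟩ ⟨hr', hy⟩ s t hs ht hst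
  obtain rfl : t = 1 - s := by linarith
  refine ⟨by simp only [Prod.snd_add, Prod.smul_snd, smul_eq_mul]; positivity, ?_⟩
  calc f (s • x + (1 - s) • y)
      ≤ ENNReal.ofReal s * ENNReal.ofReal r + ENNReal.ofReal (1 - s) * ENNReal.ofReal r' :=
        (hconv x y s hs (by linarith)).trans (by gcongr)
    _ = ENNReal.ofReal (s * r + (1 - s) * r') := by
        rw [← ENNReal.ofReal_mul hs, ← ENNReal.ofReal_mul ht,
          ENNReal.ofReal_add (by positivity) (by positivity)]

variable [NormedAddCommGroup E] [NormedSpace ℝ E]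

lemma exists_continuousAffineMap_le_lt {f : E → ℝ≥0∞}
    (hconv : ∀ (x y : E) (t : ℝ), 0 ≤ t → t ≤ 1 →
      f (t • x + (1 - t) • y) ≤ ENNReal.ofReal t * f x + ENNReal.ofReal (1 - t) * f y)
    (hlsc : LowerSemicontinuous f) {a : E} {ρ : ℝ} (hρ : ENNReal.ofReal ρ < f a) :
    ∃ ℓ : E →ᴬ[ℝ] ℝ, (∀ x, ENNReal.ofReal (ℓ x) ≤ f x) ∧ ρ < ℓ a := by
  obtain ⟨L, u, hLa, hLC⟩ := geometric_hahn_banach_point_closed (convex_realEpigraph hconv)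
    (isClosed_realEpigraph hlsc) (x := (a, ρ)) fun h => h.2.not_gt hρ
  set ℓ := L.comp (.inl ℝ E ℝ)
  set β := L (0, 1)
  have hL : ∀ x t, L (x, t) = ℓ x + t * β := fun x t => by
    have : L (0, t) = t * β := by
      rw [← smul_eq_mul, ← map_smul, Prod.smul_mk, smul_zero, smul_eq_mul, mul_one]
    rw [← L.comp_inl_add_comp_inr]
    simp [ℓ, this]
  have hLa' : ℓ a + ρ * β < u := hL a ρ ▸ hLa
  have hC : ∀ x, f x ≠ ⊤ → ∀ t, (f x).toReal ≤ t → u < ℓ x + t * β := fun x hx t ht =>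
    hL x t ▸ hLC (x, t) ⟨ENNReal.toReal_nonneg.trans ht, (ENNReal.ofReal_toReal hx).symm.le.trans
      (ENNReal.ofReal_le_ofReal ht)⟩
  suffices ∃ k c : ℝ, (∀ x, f x ≠ ⊤ → k * (u - ℓ x) + c ≤ (f x).toReal) ∧ ρ < k * (u - ℓ a) + c by
    obtain ⟨k, c, hle, hlt⟩ := this
    refine ⟨(-k) • ℓ.toContinuousAffineMap + ContinuousAffineMap.const ℝ E (k * u + c),
      fun x => ?_, by simp; linarith⟩
    rcases eq_or_ne (f x) ⊤ with hx | hx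
    · simp [hx]
    · exact ENNReal.ofReal_le_of_le_toReal (by simp; linarith [hle x hx])
  rcases lt_or_ge 0 β with hβ | hβ
  · refine ⟨β⁻¹, 0, fun x hx => ?_, ?_⟩
    · have := hC x hx _ le_rfl
      rw [add_zero, ← div_eq_inv_mul, div_le_iff₀ hβ]
      linarith
    · rw [add_zero, ← div_eq_inv_mul, lt_div_iff₀ hβ]
      linarith
  · -- `0` is a minorant, and adding `k ≥ 0` times `u - ρ * β - ℓ`, negative where `f < ⊤`,
    -- keeps it one
    have hδ : 0 < u - ρ * β - ℓ a := by linarith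
    set k := (|ρ| + 1) / (u - ρ * β - ℓ a)
    have hk : 0 ≤ k := by positivity
    refine ⟨k, -(k * (ρ * β)), fun x hx => ?_, ?_⟩
    · have h₁ := hC x hx (max (f x).toReal ρ) (le_max_left _ _)
      have h₂ : max (f x).toReal ρ * β ≤ ρ * β := mul_le_mul_of_nonpos_right (le_max_right _ _) hβ
      have h₃ : k * (u - ρ * β - ℓ x) ≤ 0 := mul_nonpos_of_nonneg_of_nonpos hk (by linarith)
      linarith [ENNReal.toReal_nonneg (a := f x)]
    · have : k * (u - ρ * β - ℓ a) = |ρ| + 1 := div_mul_cancel₀ _ hδ.ne'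
      linarith [le_abs_self ρ]

lemma exists_seq_continuousAffineMap_iSup_eq [FiniteDimensional ℝ E] {f : E → ℝ≥0∞}
    (hconv : ∀ (x y : E) (t : ℝ), 0 ≤ t → t ≤ 1 →
      f (t • x + (1 - t) • y) ≤ ENNReal.ofReal t * f x + ENNReal.ofReal (1 - t) * f y)
    (hlsc : LowerSemicontinuous f) :
    ∃ ℓ : ℕ → E →ᴬ[ℝ] ℝ, (∀ n x, ENNReal.ofReal (ℓ n x) ≤ f x) ∧
      ∀ x, f x = ⨆ n, ENNReal.ofReal (ℓ n x) := by
  let T := ContinuousAffineMap.decompLinearIsometryEquiv ℝ ℝ E ℝ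
  have : SecondCountableTopology (E →ᴬ[ℝ] ℝ) := T.toHomeomorph.secondCountableTopology
  have hT : ∀ (ℓ : E →ᴬ[ℝ] ℝ) x, ℓ x = (T ℓ).2 x + (T ℓ).1 := fun ℓ x =>
    congrFun ℓ.decomp x
  have heval : ∀ x, Continuous fun ℓ : E →ᴬ[ℝ] ℝ => ℓ x := fun x => by
    simp_rw [hT]; fun_prop
  let S := {ℓ : E →ᴬ[ℝ] ℝ | ∀ x, ENNReal.ofReal (ℓ x) ≤ f x}
  have : Nonempty S := ⟨⟨0, fun x => by simp⟩⟩
  let e : ℕ → S := TopologicalSpace.denseSeq S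
  refine ⟨fun n => e n, fun n => (e n).2, fun a => le_antisymm (le_of_forall_lt fun c hc => ?_)
    (iSup_le fun n => (e n).2 a)⟩
  obtain ⟨ρ, -, hcρ, hρ⟩ := ENNReal.lt_iff_exists_real_btwn.1 hc
  obtain ⟨ℓ, hℓf, hℓa⟩ := exists_continuousAffineMap_le_lt hconv hlsc hρ
  obtain ⟨n, hn⟩ := (TopologicalSpace.denseRange_denseSeq S).exists_mem_open
    (isOpen_lt continuous_const ((heval a).comp continuous_subtype_val)) ⟨⟨ℓ, hℓf⟩, hℓa⟩
  exact hcρ.trans_le <| (ENNReal.ofReal_le_ofReal hn.le).trans <|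
    le_iSup (fun n => ENNReal.ofReal ((e n : E →ᴬ[ℝ] ℝ) a)) n

end ConvexAnalysis

lemma sub_le_sum_clippedWeight_mul {ι : Type*} {s : Finset ι} {r : ι → ℝ} {M ε : ℝ} (hε : 0 < ε)
    (hM : ε < M → ∃ i ∈ s, r i = M) :
    M - ε ≤ ∑ i ∈ s, max 0 (r i - M + ε) / max ε (∑ j ∈ s, max 0 (r j - M + ε)) * r i := by
  set D := max ε (∑ j ∈ s, max 0 (r j - M + ε))
  have hD : 0 < D := lt_max_of_lt_left hε
  have hθ₀ : ∀ i, 0 ≤ max 0 (r i - M + ε) / D := fun i => div_nonneg (le_max_left _ _) hD.le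
  have hθ₁ : ∑ i ∈ s, max 0 (r i - M + ε) / D ≤ 1 := by
    rw [← Finset.sum_div, div_le_one hD]
    exact le_max_right _ _
  -- only indices with `r i > M - ε` carry weight
  have hsum : (M - ε) * ∑ i ∈ s, max 0 (r i - M + ε) / D ≤
      ∑ i ∈ s, max 0 (r i - M + ε) / D * r i := by
    rw [Finset.mul_sum]
    refine Finset.sum_le_sum fun i _ => ?_
    rcases le_total (r i - M + ε) 0 with h | h
    · simp [max_eq_left h]
    · nlinarith [hθ₀ i]
  by_cases hMε : M ≤ ε
  · nlinarith [Finset.sum_nonneg fun i (_ : i ∈ s) => hθ₀ i]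
  obtain ⟨i, hi, hri⟩ := hM (not_le.1 hMε)
  have hDsum : D = ∑ j ∈ s, max 0 (r j - M + ε) := max_eq_right <|
    calc ε = max 0 (r i - M + ε) := by rw [hri, sub_self, zero_add, max_eq_right hε.le]
      _ ≤ _ := Finset.single_le_sum (f := fun j => max 0 (r j - M + ε))
        (fun j _ => le_max_left _ _) hi
  rw [← Finset.sum_div, ← hDsum, div_self hD.ne', mul_one] at hsum
  exact hsum

lemma exists_continuous_weights_near_max {Y ι : Type*} [TopologicalSpace Y] (s : Finset ι)
    {g : ι → Y → ℝ} (hg : ∀ i, Continuous (g i)) {ε : ℝ} (hε : 0 < ε) :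
    ∃ θ : ι → Y → ℝ, (∀ i, Continuous (θ i)) ∧ (∀ i y, 0 ≤ θ i y) ∧ (∀ y, ∑ i ∈ s, θ i y ≤ 1) ∧
      ∀ y, 0 ≤ ∑ j ∈ s, θ j y * g j y + ε ∧ ∀ i ∈ s, g i y ≤ ∑ j ∈ s, θ j y * g j y + ε := by
  let M : Y → ℝ := fun y => (s.sup fun i => (g i y).toNNReal : ℝ≥0)
  have hM : Continuous M := NNReal.continuous_coe.comp
    (Continuous.finset_sup_apply fun i _ => continuous_real_toNNReal.comp (hg i))
  have hgM : ∀ y, ∀ i ∈ s, g i y ≤ M y := fun y i hi => (Real.le_coe_toNNReal _).trans <|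
    NNReal.coe_le_coe.2 (Finset.le_sup (f := fun i => (g i y).toNNReal) hi)
  have hMg : ∀ y, 0 < M y → ∃ i ∈ s, g i y = M y := fun y hMy => by
    have hs : s.Nonempty := Finset.nonempty_iff_ne_empty.2 fun h => by simp [M, h] at hMy
    obtain ⟨i, hi, h⟩ := Finset.exists_mem_eq_sup s hs fun i => (g i y).toNNReal
    refine ⟨i, hi, ?_⟩
    simp only [M, h] at hMy ⊢
    exact (Real.coe_toNNReal _ (Real.toNNReal_pos.1 hMy).le).symm
  let w : ι → Y → ℝ := fun i y => max 0 (g i y - M y + ε)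
  have hw : ∀ i, Continuous (w i) := fun i =>
    continuous_const.max (((hg i).sub hM).add continuous_const)
  refine ⟨fun i y => w i y / max ε (∑ j ∈ s, w j y),
    fun i => (hw i).div (continuous_const.max (continuous_finsetSum _ fun j _ => hw j))
      fun y => (lt_max_of_lt_left hε).ne',
    fun i y => div_nonneg (le_max_left _ _) (lt_max_of_lt_left hε).le,
    fun y => by rw [← Finset.sum_div, div_le_one (lt_max_of_lt_left hε)]; exact le_max_right _ _,
    fun y => ?_⟩
  have := sub_le_sum_clippedWeight_mul (s := s) (r := fun i => g i y) hε
    fun h => hMg y (hε.trans h)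
  simp only [w]
  exact ⟨by linarith [NNReal.coe_nonneg (s.sup fun i => (g i y).toNNReal)],
    fun i hi => by linarith [hgM y i hi]⟩

lemma MeasureTheory.Integrable.exists_seq_continuous_tendsto_ae {α E : Type*} [TopologicalSpace α]
    [NormalSpace α] [MeasurableSpace α] [BorelSpace α] [NormedAddCommGroup E] [NormedSpace ℝ E]
    {μ : Measure α} [μ.WeaklyRegular] {f : α → E} (hf : Integrable f μ) :
    ∃ g : ℕ → α → E, (∀ n, Continuous (g n)) ∧
      ∀ᵐ x ∂μ, Tendsto (fun n => g n x) atTop (𝓝 (f x)) := by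
  have := fun n : ℕ => hf.exists_boundedContinuous_lintegral_sub_le
    (ENNReal.inv_ne_zero.2 (ENNReal.natCast_ne_top n))
  choose g hg hgi using this
  have hL1 : Tendsto (fun n => eLpNorm (⇑(g n) - f) 1 μ) atTop (𝓝 0) := by
    refine tendsto_of_tendsto_of_tendsto_of_le_of_le tendsto_const_nhds
      ENNReal.tendsto_inv_nat_nhds_zero (fun _ => bot_le) fun n => ?_
    simpa [eLpNorm_one_eq_lintegral_enorm, enorm_sub_rev] using hg n
  obtain ⟨ns, -, hns⟩ := (tendstoInMeasure_of_tendsto_eLpNorm one_ne_zero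
    (fun n => (hgi n).1) hf.1 hL1).exists_seq_tendsto_ae
  exact ⟨fun n => g (ns n), fun n => (g (ns n)).continuous, hns⟩

lemma MeasureTheory.ofReal_integral_le_lintegral_ofReal {α : Type*} [MeasurableSpace α]
    {μ : Measure α} {g : α → ℝ} (hg : Integrable g μ) :
    ENNReal.ofReal (∫ x, g x ∂μ) ≤ ∫⁻ x, ENNReal.ofReal (g x) ∂μ := by
  rw [integral_eq_lintegral_pos_part_sub_lintegral_neg_part hg]
  exact (ENNReal.ofReal_le_ofReal (sub_le_self _ ENNReal.toReal_nonneg)).trans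
    ENNReal.ofReal_toReal_le

lemma ENNReal.ofReal_sum_mul_le {ι : Type*} {s : Finset ι} {t r : ι → ℝ} {b : ℝ≥0∞}
    (ht₀ : ∀ i ∈ s, 0 ≤ t i) (ht₁ : ∑ i ∈ s, t i ≤ 1) (hr : ∀ i ∈ s, ENNReal.ofReal (r i) ≤ b) :
    ENNReal.ofReal (∑ i ∈ s, t i * r i) ≤ b := by
  rcases eq_or_ne b ⊤ with rfl | hb
  · exact le_top
  refine ENNReal.ofReal_le_of_le_toReal ?_
  calc ∑ i ∈ s, t i * r i ≤ ∑ i ∈ s, t i * b.toReal :=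
        Finset.sum_le_sum fun i hi =>
          mul_le_mul_of_nonneg_left ((ENNReal.ofReal_le_iff_le_toReal hb).1 (hr i hi)) (ht₀ i hi)
    _ ≤ b.toReal := by
        rw [← Finset.sum_mul]
        exact mul_le_of_le_one_left ENNReal.toReal_nonneg ht₁

lemma abs_sum_mul_le_sum_abs {ι : Type*} {s : Finset ι} {t r : ι → ℝ}
    (ht₀ : ∀ i ∈ s, 0 ≤ t i) (ht₁ : ∑ i ∈ s, t i ≤ 1) :
    |∑ i ∈ s, t i * r i| ≤ ∑ i ∈ s, |r i| :=
  (Finset.abs_sum_le_sum_abs _ _).trans <| Finset.sum_le_sum fun i hi => by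
    rw [abs_mul, abs_of_nonneg (ht₀ i hi)]
    exact mul_le_of_le_one_left (abs_nonneg _) ((Finset.single_le_sum ht₀ hi).trans ht₁)

lemma ContinuousAffineMap.integrable_comp {α E : Type*} [MeasurableSpace α] {μ : Measure α}
    [IsFiniteMeasure μ] [NormedAddCommGroup E] [NormedSpace ℝ E] (ℓ : E →ᴬ[ℝ] ℝ) {B : α → E}
    (hB : Integrable B μ) : Integrable (fun x => ℓ (B x)) μ :=
  ((ℓ.contLinear.integrable_comp hB).add (integrable_const (ℓ 0))).congr <|
    ae_of_all _ fun x => (congrFun ℓ.decomp (B x)).symm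

section WeakConvergence

variable {X : Type*} [TopologicalSpace X] [CompactSpace X] [MeasurableSpace X]
  [OpensMeasurableSpace X] {E : Type*} [NormedAddCommGroup E] [NormedSpace ℝ E]

lemma MeasureTheory.Integrable.continuous_smul {F : Type*} [NormedAddCommGroup F]
    [NormedSpace ℝ F] {μ : Measure X} {B : X → F} (hB : Integrable B μ) {w : X → ℝ}
    (hw : Continuous w) : Integrable (fun x => w x • B x) μ :=
  hB.smul_of_top_right (hw.memLp_top_of_hasCompactSupport (.of_compactSpace w) μ)

lemma integral_mul_continuousAffineMap [CompleteSpace E] {μ : Measure X} [IsFiniteMeasure μ]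
    {w : X → ℝ} (hw : Continuous w) (ℓ : E →ᴬ[ℝ] ℝ) {B : X → E} (hB : Integrable B μ) :
    ∫ x, w x * ℓ (B x) ∂μ = ℓ.contLinear (∫ x, w x • B x ∂μ) + ℓ 0 * ∫ x, w x ∂μ := by
  have hsplit : ∀ x, w x * ℓ (B x) = ℓ.contLinear (w x • B x) + ℓ 0 * w x := fun x => by
    rw [congrFun ℓ.decomp, map_smul, smul_eq_mul]
    simp only [Pi.add_apply, Function.const_apply]
    ring
  simp_rw [hsplit]
  rw [integral_add (ℓ.contLinear.integrable_comp (hB.continuous_smul hw))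
      ((hw.integrable_of_hasCompactSupport (.of_compactSpace w)).const_mul _),
    integral_const_mul, ℓ.contLinear.integral_comp_comm (hB.continuous_smul hw)]

def TendstoWeaklyWithDensity (Vh : ℕ → Measure X) (Ah : ℕ → X → E) (V : Measure X)
    (A : X → E) : Prop :=
  (∀ φ : X → ℝ, Continuous φ → Tendsto (fun n => ∫ x, φ x ∂Vh n) atTop (𝓝 (∫ x, φ x ∂V))) ∧
    ∀ φ : X → ℝ, Continuous φ →
      Tendsto (fun n => ∫ x, φ x • Ah n x ∂Vh n) atTop (𝓝 (∫ x, φ x • A x ∂V))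

namespace TendstoWeaklyWithDensity

variable {Vh : ℕ → Measure X} {Ah : ℕ → X → E} {V : Measure X} {A : X → E}
  [∀ n, IsFiniteMeasure (Vh n)] [IsFiniteMeasure V]

lemma tendsto_integral_mul [CompleteSpace E] (h : TendstoWeaklyWithDensity Vh Ah V A)
    (hAh : ∀ n, Integrable (Ah n) (Vh n)) (hA : Integrable A V) {w : X → ℝ} (hw : Continuous w)
    (ℓ : E →ᴬ[ℝ] ℝ) :
    Tendsto (fun n => ∫ x, w x * ℓ (Ah n x) ∂Vh n) atTop (𝓝 (∫ x, w x * ℓ (A x) ∂V)) := by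
  rw [integral_mul_continuousAffineMap hw ℓ hA]
  exact (((ℓ.contLinear.continuous.tendsto _).comp (h.2 w hw)).add ((h.1 w hw).const_mul _)).congr
    fun n => (integral_mul_continuousAffineMap hw ℓ (hAh n)).symm

lemma ofReal_integral_le_liminf [CompleteSpace E] (h : TendstoWeaklyWithDensity Vh Ah V A)
    (hAh : ∀ n, Integrable (Ah n) (Vh n)) (hA : Integrable A V) {f : E → ℝ≥0∞} {ι : Type*}
    {s : Finset ι} {ℓ : ι → E →ᴬ[ℝ] ℝ} (hℓ : ∀ i ∈ s, ∀ a, ENNReal.ofReal (ℓ i a) ≤ f a)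
    {w : ι → X → ℝ} (hw : ∀ i, Continuous (w i)) (hw₀ : ∀ i x, 0 ≤ w i x)
    (hw₁ : ∀ x, ∑ i ∈ s, w i x ≤ 1) :
    ENNReal.ofReal (∫ x, ∑ i ∈ s, w i x * ℓ i (A x) ∂V) ≤
      liminf (fun n => ∫⁻ x, f (Ah n x) ∂Vh n) atTop := by
  have hint : ∀ {μ : Measure X} [IsFiniteMeasure μ] {B : X → E}, Integrable B μ → ∀ i,
      Integrable (fun x => w i x * ℓ i (B x)) μ := fun hB i =>
    ((ℓ i).integrable_comp hB).continuous_smul (hw i)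
  have hlim : Tendsto (fun n => ∫ x, ∑ i ∈ s, w i x * ℓ i (Ah n x) ∂Vh n) atTop
      (𝓝 (∫ x, ∑ i ∈ s, w i x * ℓ i (A x) ∂V)) := by
    rw [integral_finsetSum s fun i _ => hint hA i]
    exact (tendsto_finsetSum s fun i _ => h.tendsto_integral_mul hAh hA (hw i) (ℓ i)).congr
      fun n => (integral_finsetSum s fun i _ => hint (hAh n) i).symm
  rw [← ((ENNReal.continuous_ofReal.tendsto _).comp hlim).liminf_eq]
  refine liminf_le_liminf (Eventually.of_forall fun n => ?_)
  refine (ofReal_integral_le_lintegral_ofReal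
    (integrable_finsetSum s fun i _ => hint (hAh n) i)).trans ?_
  exact lintegral_mono fun x => ofReal_sum_mul_le (fun i _ => hw₀ i x) (hw₁ x) fun i hi => hℓ i hi _

lemma ofReal_integral_sum_comp_mul_le_liminf [CompleteSpace E] [NormalSpace X] [BorelSpace X]
    [V.WeaklyRegular] (h : TendstoWeaklyWithDensity Vh Ah V A)
    (hAh : ∀ n, Integrable (Ah n) (Vh n)) (hA : Integrable A V) {f : E → ℝ≥0∞} {ι : Type*}
    {s : Finset ι} {ℓ : ι → E →ᴬ[ℝ] ℝ} (hℓ : ∀ i ∈ s, ∀ a, ENNReal.ofReal (ℓ i a) ≤ f a)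
    {θ : ι → E → ℝ} (hθ : ∀ i, Continuous (θ i)) (hθ₀ : ∀ i a, 0 ≤ θ i a)
    (hθ₁ : ∀ a, ∑ i ∈ s, θ i a ≤ 1) :
    ENNReal.ofReal (∫ x, ∑ i ∈ s, θ i (A x) * ℓ i (A x) ∂V) ≤
      liminf (fun n => ∫⁻ x, f (Ah n x) ∂Vh n) atTop := by
  -- `θ i ∘ A` need not be continuous, but `θ i ∘ B k` is
  obtain ⟨B, hBc, hBA⟩ := hA.exists_seq_continuous_tendsto_ae
  have hlim : Tendsto (fun k => ∫ x, ∑ i ∈ s, θ i (B k x) * ℓ i (A x) ∂V) atTop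
      (𝓝 (∫ x, ∑ i ∈ s, θ i (A x) * ℓ i (A x) ∂V)) :=
    tendsto_integral_of_dominated_convergence (fun x => ∑ i ∈ s, |ℓ i (A x)|)
      (fun k => (integrable_finsetSum s fun i _ =>
        ((ℓ i).integrable_comp hA).continuous_smul ((hθ i).comp (hBc k))).1)
      (integrable_finsetSum s fun i _ => ((ℓ i).integrable_comp hA).abs)
      (fun k => ae_of_all _ fun x =>
        abs_sum_mul_le_sum_abs (fun i _ => hθ₀ i (B k x)) (hθ₁ (B k x)))
      (hBA.mono fun x hx => tendsto_finsetSum s fun i _ =>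
        (((hθ i).tendsto _).comp hx).mul_const _)
  exact le_of_tendsto' ((ENNReal.continuous_ofReal.tendsto _).comp hlim) fun k =>
    h.ofReal_integral_le_liminf hAh hA hℓ (fun i => (hθ i).comp (hBc k)) (fun i x => hθ₀ i _)
      fun x => hθ₁ _

lemma lintegral_iSup_ofReal_le_liminf [CompleteSpace E] [NormalSpace X] [BorelSpace X]
    [V.WeaklyRegular] (h : TendstoWeaklyWithDensity Vh Ah V A)
    (hAh : ∀ n, Integrable (Ah n) (Vh n)) (hA : Integrable A V) {f : E → ℝ≥0∞} {ι : Type*}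
    {s : Finset ι} {ℓ : ι → E →ᴬ[ℝ] ℝ} (hℓ : ∀ i ∈ s, ∀ a, ENNReal.ofReal (ℓ i a) ≤ f a) :
    ∫⁻ x, ⨆ i ∈ s, ENNReal.ofReal (ℓ i (A x)) ∂V ≤
      liminf (fun n => ∫⁻ x, f (Ah n x) ∂Vh n) atTop := by
  refine ENNReal.le_of_forall_pos_le_add fun δ hδ _ => ?_
  set ε : ℝ := δ / (V.real univ + 1)
  obtain ⟨θ, hθ, hθ₀, hθ₁, hθℓ⟩ := exists_continuous_weights_near_max s
    (g := fun i a => ℓ i a) (fun i => (ℓ i).cont) (show 0 < ε by positivity)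
  let F : X → ℝ := fun x => ∑ i ∈ s, θ i (A x) * ℓ i (A x)
  have hF : Integrable F V :=
    (integrable_finsetSum s fun i _ => ((ℓ i).integrable_comp hA).abs).mono'
      ((continuous_finsetSum s fun i _ => (hθ i).mul (ℓ i).cont).comp_aestronglyMeasurable hA.1)
      (ae_of_all _ fun x => abs_sum_mul_le_sum_abs (fun i _ => hθ₀ i (A x)) (hθ₁ (A x)))
  calc ∫⁻ x, ⨆ i ∈ s, ENNReal.ofReal (ℓ i (A x)) ∂V
      ≤ ∫⁻ x, ENNReal.ofReal (F x + ε) ∂V :=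
        lintegral_mono fun x => iSup₂_le fun i hi => ENNReal.ofReal_le_ofReal ((hθℓ (A x)).2 i hi)
    _ = ENNReal.ofReal (∫ x, F x + ε ∂V) := (ofReal_integral_eq_lintegral_ofReal
          (hF.add (integrable_const ε)) (ae_of_all _ fun x => (hθℓ (A x)).1)).symm
    _ = ENNReal.ofReal (∫ x, F x ∂V + ε * V.real univ) := by
        rw [integral_add hF (integrable_const ε), integral_const, smul_eq_mul, mul_comm]
    _ ≤ ENNReal.ofReal (∫ x, F x ∂V) + ENNReal.ofReal (ε * V.real univ) := ENNReal.ofReal_add_le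
    _ ≤ liminf (fun n => ∫⁻ x, f (Ah n x) ∂Vh n) atTop + δ := by
        refine add_le_add (h.ofReal_integral_sum_comp_mul_le_liminf hAh hA hℓ hθ hθ₀ hθ₁)
          (ENNReal.ofReal_le_of_le_toReal ?_)
        rw [ENNReal.coe_toReal, div_mul_eq_mul_div, div_le_iff₀ (by positivity)]
        nlinarith [δ.2]

end TendstoWeaklyWithDensity

end WeakConvergence

theorem lsc_convex_integrand_weak_convergence_general
    {X : Type*} [MetricSpace X] [CompactSpace X] [MeasurableSpace X] [BorelSpace X]
    {d : ℕ}
    (f : (Fin d → ℝ) → ℝ≥0∞)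
    (hconv : ∀ (x y : Fin d → ℝ) (t : ℝ), 0 ≤ t → t ≤ 1 →
      f (t • x + (1 - t) • y) ≤ ENNReal.ofReal t * f x + ENNReal.ofReal (1 - t) * f y)
    (hlsc : LowerSemicontinuous f)
    (Vh : ℕ → Measure X) (V : Measure X)
    (hVhfin : ∀ h, IsFiniteMeasure (Vh h)) (hVfin : IsFiniteMeasure V)
    (Ah : ℕ → X → (Fin d → ℝ)) (A : X → (Fin d → ℝ))
    (hAhint : ∀ h, Integrable (Ah h) (Vh h)) (hAint : Integrable A V)
    (hweak : ∀ φ : X → ℝ, Continuous φ →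
      Tendsto (fun h => ∫ x, φ x ∂(Vh h)) atTop (𝓝 (∫ x, φ x ∂V)))
    (hweakvec : ∀ φ : X → ℝ, Continuous φ →
      Tendsto (fun h => ∫ x, φ x • Ah h x ∂(Vh h)) atTop (𝓝 (∫ x, φ x • A x ∂V))) :
    ∫⁻ x, f (A x) ∂V ≤ liminf (fun h => ∫⁻ x, f (Ah h x) ∂(Vh h)) atTop := by
  obtain ⟨ℓ, hℓf, hfℓ⟩ := exists_seq_continuousAffineMap_iSup_eq hconv hlsc
  have h : TendstoWeaklyWithDensity Vh Ah V A := ⟨hweak, hweakvec⟩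
  calc ∫⁻ x, f (A x) ∂V = ∫⁻ x, ⨆ s : Finset ℕ, ⨆ n ∈ s, ENNReal.ofReal (ℓ n (A x)) ∂V :=
        lintegral_congr fun x => by rw [hfℓ, iSup_eq_iSup_finset]
    _ = ⨆ s : Finset ℕ, ∫⁻ x, ⨆ n ∈ s, ENNReal.ofReal (ℓ n (A x)) ∂V :=
        lintegral_iSup_directed (fun s => AEMeasurable.biSup _ s.countable_toSet fun n _ =>
            (ENNReal.measurable_ofReal.comp (ℓ n).cont.measurable).comp_aemeasurable
              hAint.aemeasurable)
          (Monotone.directed_le fun s t hst x => biSup_mono fun _ hn => Finset.mem_of_subset hst hn)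
    _ ≤ liminf (fun h => ∫⁻ x, f (Ah h x) ∂(Vh h)) atTop :=
        iSup_le fun s => h.lintegral_iSup_ofReal_le_liminf hAhint hAint fun n _ => hℓf n

/-- **Lower semicontinuity of convex curvature integrands under weak convergence of
varifolds** (the last part of Allard's compactness theorem as stated in the paper).
If finite measures Vₕ ⇀ V weakly and the vector measures Aₕ·Vₕ ⇀ A·V weakly, then for
every convex lower semicontinuous f : ℝᵈ → [0,∞],
∫ f(A) dV ≤ liminf_h ∫ f(Aₕ) dVₕ. -/
theorem lsc_convex_integrand_weak_convergence
    {X : Type*} [MetricSpace X] [CompactSpace X] [MeasurableSpace X] [BorelSpace X]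
    {d : ℕ} (hd : 1 ≤ d)
    (f : (Fin d → ℝ) → ℝ≥0∞)
    (hconv : ∀ (x y : Fin d → ℝ) (t : ℝ), 0 ≤ t → t ≤ 1 →
      f (t • x + (1 - t) • y) ≤ ENNReal.ofReal t * f x + ENNReal.ofReal (1 - t) * f y)
    (hlsc : LowerSemicontinuous f)
    (Vh : ℕ → Measure X) (V : Measure X)
    (hVhfin : ∀ h, IsFiniteMeasure (Vh h)) (hVfin : IsFiniteMeasure V)
    (Ah : ℕ → X → (Fin d → ℝ)) (A : X → (Fin d → ℝ))
    (hAhint : ∀ h, Integrable (Ah h) (Vh h)) (hAint : Integrable A V)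
    (hweak : ∀ φ : X → ℝ, Continuous φ →
      Tendsto (fun h => ∫ x, φ x ∂(Vh h)) atTop (𝓝 (∫ x, φ x ∂V)))
    (hweakvec : ∀ φ : X → ℝ, Continuous φ →
      Tendsto (fun h => ∫ x, φ x • Ah h x ∂(Vh h)) atTop (𝓝 (∫ x, φ x • A x ∂V))) :
    ∫⁻ x, f (A x) ∂V ≤ liminf (fun h => ∫⁻ x, f (Ah h x) ∂(Vh h)) atTop :=
  lsc_convex_integrand_weak_convergence_general f hconv hlsc Vh V hVhfin hVfin Ah A hAhint hAint
    hweak hweakvec
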